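/- arXiv:2008.11119 — 2 statements merged into one kernel-verified Lean document; each statement's English description precedes it below -/
import Mathlib

section
/- Fix 𝒜 ⊆ ℕ and a finite set 𝓗 = {h₁,…,h_k} of integers with a partition 𝓗 = B₁ ∪ … ∪ B_M. Let μᵢ, tᵢ ≥ 1 be real numbers for 1 ≤ i ≤ M, let ρ_𝒜 be a non-negative function on the integers supported on 𝒜 (i.e. ρ_𝒜(n) = 0 whenever n ∉ 𝒜), and let w(n) ≥ 0 be non-negative weights. If Σ_{N ≤ n < 2N} [ min_{1≤j≤M} (μ_j²/t_j²) − Σ_{i=1}^{M} ( (Σ_{h ∈ Bᵢ} ρ_𝒜(n+h) − μᵢ) / tᵢ )² ] · w(n) > 0, then there exists n ∈ [N, 2N) and, for each 1 ≤ i ≤ M, an element h_{a_i} ∈ Bᵢ such that n + h_{a_i} ∈ 𝒜. -/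
open Finset

theorem Finset.ne_zero_of_sum_sq_div_lt_inf' {ι : Type*} {s : Finset ι} (hs : s.Nonempty)
    {a μ t : ι → ℝ}
    (h : ∑ i ∈ s, ((a i - μ i) / t i) ^ 2 < s.inf' hs fun j => μ j ^ 2 / t j ^ 2)
    {i : ι} (hi : i ∈ s) : a i ≠ 0 := by
  intro hai
  have hterm : μ i ^ 2 / t i ^ 2 ≤ ∑ j ∈ s, ((a j - μ j) / t j) ^ 2 := by
    simpa [hai, div_pow] using
      single_le_sum (f := fun j => ((a j - μ j) / t j) ^ 2) (fun j _ => sq_nonneg _) hi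
  exact (h.trans_le (inf'_le _ hi)).not_ge hterm

theorem stmt3_general (A : Set ℕ) (M : ℕ) (hM : 1 ≤ M) (B : ℕ → Finset ℤ)
    (μ t : ℕ → ℝ)
    (ρ : ℤ → ℝ)
    (hsupp : ∀ x : ℤ, ρ x ≠ 0 → ∃ m ∈ A, (m : ℤ) = x)
    (w : ℕ → ℝ) (hw : ∀ n, 0 ≤ w n) (N : ℕ)
    (hpos : 0 < ∑ n ∈ Finset.Ico N (2 * N),
      (((Finset.Icc 1 M).inf' (Finset.nonempty_Icc.2 hM)
          fun j => μ j ^ 2 / t j ^ 2) -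
        ∑ i ∈ Finset.Icc 1 M,
          (((∑ h ∈ B i, ρ ((n : ℤ) + h)) - μ i) / t i) ^ 2) * w n) :
    ∃ n ∈ Finset.Ico N (2 * N), ∀ i, 1 ≤ i → i ≤ M →
      ∃ x ∈ B i, ∃ m ∈ A, (m : ℤ) = (n : ℤ) + x := by
  obtain ⟨n, hn, hterm⟩ := exists_lt_of_sum_lt (f := fun _ => (0 : ℝ)) (by simpa using hpos)
  have hvar := sub_pos.mp (pos_of_mul_pos_left hterm (hw n))
  refine ⟨n, hn, fun i hi1 hiM => ?_⟩
  obtain ⟨x, hx, hρx⟩ := exists_ne_zero_of_sum_ne_zero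
    (ne_zero_of_sum_sq_div_lt_inf' _ hvar (mem_Icc.2 ⟨hi1, hiM⟩))
  exact ⟨x, hx, hsupp _ hρx⟩

/-- second moment estimate. -/
theorem stmt3 (A : Set ℕ) (M : ℕ) (hM : 1 ≤ M) (B : ℕ → Finset ℤ)
    (hdisj : ∀ i j, 1 ≤ i → i ≤ M → 1 ≤ j → j ≤ M → i ≠ j → Disjoint (B i) (B j))
    (μ t : ℕ → ℝ)
    (hμ : ∀ i, 1 ≤ i → i ≤ M → 1 ≤ μ i) (ht : ∀ i, 1 ≤ i → i ≤ M → 1 ≤ t i)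
    (ρ : ℤ → ℝ) (hρ0 : ∀ x, 0 ≤ ρ x)
    (hsupp : ∀ x : ℤ, ρ x ≠ 0 → ∃ m ∈ A, (m : ℤ) = x)
    (w : ℕ → ℝ) (hw : ∀ n, 0 ≤ w n) (N : ℕ)
    (hpos : 0 < ∑ n ∈ Finset.Ico N (2 * N),
      (((Finset.Icc 1 M).inf' (Finset.nonempty_Icc.2 hM)
          fun j => μ j ^ 2 / t j ^ 2) -
        ∑ i ∈ Finset.Icc 1 M,
          (((∑ h ∈ B i, ρ ((n : ℤ) + h)) - μ i) / t i) ^ 2) * w n) :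
    ∃ n ∈ Finset.Ico N (2 * N), ∀ i, 1 ≤ i → i ≤ M →
      ∃ x ∈ B i, ∃ m ∈ A, (m : ℤ) = (n : ℤ) + x :=
  stmt3_general A M hM B μ t ρ hsupp w hw N hpos
end

section
/- With the sieve set-up in the context, let J = ∅, m ∈ {1,…,k}, let p₁ be 1 or a prime, and take f(p) = 1/p for all primes p, so that f* := μ * (1/f) equals Euler's totient φ. Define y^{(J,p₁,m)}_{r₁,…,r_k} = (∏_{i=1}^{k} μ(rᵢ) φ(rᵢ)) · Σ_{d₁,…,d_k : rᵢ | dᵢ ∀i, p₁ | d_m} λ_{d₁,…,d_k} ∏_{i=1}^{k} f(dᵢ), and y_{r₁,…,r_k} = (∏_{i=1}^{k} μ(rᵢ) φ(rᵢ)) · Σ_{d₁,…,d_k : rᵢ | dᵢ ∀i} λ_{d₁,…,d_k} / ∏_{i=1}^{k} dᵢ. Suppose y^{(J,p₁,m)}_{r₁,…,r_k} ≠ 0. Then: (1) if p₁ | r_m, then y^{(J,p₁,m)}_{r₁,…,r_k} = y_{r₁,…,r_k}; (2) if p₁ ∤ r_m, then y^{(J,p₁,m)}_{r₁,…,r_k}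 = y_{r₁,…,p₁ r_m,…,r_k} / (μ(p₁) φ(p₁)). -/
open Real Finset MeasureTheory
open scoped Classical

noncomputable section

/-- `D₀ = (log log N)³`. -/
def D0 (N : ℕ) : ℝ := Real.log (Real.log N) ^ 3

/-- The primes `p ≤ x`. -/
def primesLE (x : ℝ) : Finset ℕ := (Finset.range (⌊x⌋₊ + 1)).filter Nat.Prime

/-- `W = ∏_{2 < p ≤ D₀} p`. -/
def Wfun (N : ℕ) : ℕ := ∏ p ∈ (primesLE (D0 N)).filter (fun p => 2 < p), p

/-- `W₃ = ∏_{p ≤ D₀, p ≡ 3 (mod 4)} p`. -/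
def W3fun (N : ℕ) : ℕ := ∏ p ∈ (primesLE (D0 N)).filter (fun p => p % 4 = 3), p

/-- The Ramanujan–Landau constant `A`. -/
def Aconst : ℝ :=
  (1 / Real.sqrt 2) *
    ∏' p : {p : ℕ // p.Prime ∧ p % 4 = 3}, ((1 - 1 / ((p : ℕ) : ℝ) ^ 2) ^ (-(1 : ℝ) / 2))

/-- `B = (2A/π) (φ(W₃)/W₃) (log R)^{1/2}` with `R = N^{θ₂/2}`. -/
def Bconst (θ₂ : ℝ) (N : ℕ) : ℝ :=
  (2 * Aconst / π) * ((W3fun N).totient / (W3fun N : ℝ)) *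
    Real.sqrt (Real.log ((N : ℝ) ^ (θ₂ / 2)))

/-- Number of representations of the integer `x` as a sum of two squares. -/
def rtwo (x : ℤ) : ℕ := Set.ncard {p : ℤ × ℤ | p.1 ^ 2 + p.2 ^ 2 = x}

/-- `g₂`, with `g₂(p) = 2 - 1/p` for `p ≡ 1 (mod 4)`, `g₂(p) = 1/p` for `p ≡ 3 (mod 4)`. -/
def g2 (n : ℕ) : ℝ :=
  ∏ p ∈ n.primeFactors, (if p % 4 = 1 then 2 - 1 / (p : ℝ) else 1 / (p : ℝ))

/-- Hooley's weight `t(n) = Σ_{a|n, a ≤ v, p|a ⟹ p ≡ 1 (4)} (μ(a)/g₂(a))(1 - log a/log v)`. -/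
def hooleyT (v : ℝ) (x : ℤ) : ℝ :=
  ∑ a ∈ x.natAbs.divisors.filter
      (fun a : ℕ => (a : ℝ) ≤ v ∧ ∀ p ∈ a.primeFactors, p % 4 = 1),
    ((ArithmeticFunction.moebius a : ℤ) : ℝ) / g2 a * (1 - Real.log a / Real.log v)

/-- Hooley's function `ρ(n) = t(n) r(n)`. -/
def rho (v : ℝ) (x : ℤ) : ℝ := hooleyT v x * rtwo x

variable {ι : Type} [Fintype ι] [DecidableEq ι]

/-- The Maynard–Tao sieve weights `λ_{d₁,…,d_k}` (with `R = N^{θ₂/2}` and level `W`). -/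
def lam (F : (ι → ℝ) → ℝ) (N : ℕ) (θ₂ : ℝ) (d : ι → ℕ) : ℝ :=
  if Squarefree (∏ i, d i) ∧ ((∏ i, d i : ℕ) : ℝ) ≤ (N : ℝ) ^ (θ₂ / 2) ∧
      Nat.Coprime (∏ i, d i) (Wfun N) ∧ (∀ p ∈ (∏ i, d i).primeFactors, p % 4 = 3) then
    (∏ i, ((ArithmeticFunction.moebius (d i) : ℤ) : ℝ) * (d i)) *
      ∑' r : ι → ℕ,
        (if (∀ i, d i ∣ r i) ∧ (∀ i, Nat.Coprime (r i) (Wfun N)) ∧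
            (∀ i, ∀ p ∈ (r i).primeFactors, p % 4 = 3) then
          (((ArithmeticFunction.moebius (∏ i, r i) : ℤ) : ℝ)) ^ 2 /
              (∏ i, ((r i).totient : ℝ)) *
            F (fun i => Real.log (r i) / Real.log ((N : ℝ) ^ (θ₂ / 2)))
        else 0)
  else 0

/-- The inner sieve sum `Σ_{d : dᵢ | n + hᵢ ∀ i} λ_d`. -/
def sieveInner (h : ι → ℤ) (F : (ι → ℝ) → ℝ) (N : ℕ) (θ₂ : ℝ) (n : ℕ) : ℝ :=
  ∑' d : ι → ℕ, (if ∀ i, (d i : ℤ) ∣ ((n : ℤ) + h i) then lam F N θ₂ d else 0)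

/-- The sieve sum `Σ_{N ≤ n < 2N, n ≡ v₀ (W), n ≡ 1 (4)} ex(n) (Σ_{dᵢ | n+hᵢ} λ_d)²`. -/
def sieveSum (h : ι → ℤ) (F : (ι → ℝ) → ℝ) (v₀ : ℕ) (N : ℕ) (θ₂ : ℝ) (ex : ℕ → ℝ) : ℝ :=
  ∑ n ∈ Finset.Ico N (2 * N),
    if n % (Wfun N) = v₀ % (Wfun N) ∧ n % 4 = 1 then ex n * (sieveInner h F N θ₂ n) ^ 2
    else 0

/-- The unit cube `[0,1]^ι`. -/
def cube (ι : Type) [Fintype ι] : Set (ι → ℝ) := Set.univ.pi fun _ => Set.Icc (0 : ℝ) 1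

/-- `L_k(F) = ∫_{[0,1]^k} F(x)² ∏ᵢ dxᵢ/√xᵢ`. -/
def Lk (F : (ι → ℝ) → ℝ) : ℝ :=
  ∫ x in cube ι, F x ^ 2 * ∏ i, (x i) ^ (-(1 : ℝ) / 2)

/-- `L_{k;m}(F) = ∫_{[0,1]^{k-1}} ( ∫₀¹ F dx_m/√x_m )² ∏_{i ≠ m} dxᵢ/√xᵢ`.
(The integration over the unused coordinate `x m` contributes a factor `1`.) -/
def Lkm (F : (ι → ℝ) → ℝ) (m : ι) : ℝ :=
  ∫ x in cube ι,
    (∫ t in Set.Icc (0 : ℝ) 1, F (Function.update x m t) * t ^ (-(1 : ℝ) / 2)) ^ 2 *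
      ∏ i ∈ Finset.univ.erase m, (x i) ^ (-(1 : ℝ) / 2)

/-- `L_{k;m,l}(F)`; the integrations over the unused coordinates contribute a factor `1`. -/
def Lkml (F : (ι → ℝ) → ℝ) (m l : ι) : ℝ :=
  ∫ x in cube ι,
    (∫ s in Set.Icc (0 : ℝ) 1,
        (∫ t in Set.Icc (0 : ℝ) 1,
          F (Function.update (Function.update x l s) m t) * t ^ (-(1 : ℝ) / 2)) *
        s ^ (-(1 : ℝ) / 2)) ^ 2 *
      ∏ i ∈ (Finset.univ.erase m).erase l, (x i) ^ (-(1 : ℝ) / 2)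


/-- The multiplicative function with `f(p) = 1/p` on primes (so `f(d) = 1/d` on
squarefree `d`), evaluated via the product over prime factors. -/
def fsp (n : ℕ) : ℝ := ∏ p ∈ n.primeFactors, (1 / (p : ℝ))

/-- The diagonalising vector `y^{(J,p₁,m)}_{r₁,…,r_k}` in the case `J = ∅`,
`f(p) = 1/p`, `f* = μ * (1/f) = φ`. -/
def yJvec (F : (ι → ℝ) → ℝ) (N : ℕ) (θ₂ : ℝ) (p₁ : ℕ) (m : ι) (r : ι → ℕ) : ℝ :=
  (∏ i, ((ArithmeticFunction.moebius (r i) : ℤ) : ℝ) * ((r i).totient : ℝ)) *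
    ∑' d : ι → ℕ,
      (if (∀ i, r i ∣ d i) ∧ p₁ ∣ d m then lam F N θ₂ d * ∏ i, fsp (d i) else 0)

/-- The vector `y_{r₁,…,r_k} = (∏ μ(rᵢ)φ(rᵢ)) Σ_{d : rᵢ|dᵢ} λ_d / ∏ dᵢ`. -/
def yvec (F : (ι → ℝ) → ℝ) (N : ℕ) (θ₂ : ℝ) (r : ι → ℕ) : ℝ :=
  (∏ i, ((ArithmeticFunction.moebius (r i) : ℤ) : ℝ) * ((r i).totient : ℝ)) *
    ∑' d : ι → ℕ,
      (if ∀ i, r i ∣ d i then lam F N θ₂ d / ∏ i, ((d i) : ℝ) else 0)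

lemma lam_mul_fsp (F : (ι → ℝ) → ℝ) (N : ℕ) (θ₂ : ℝ) (d : ι → ℕ) :
    lam F N θ₂ d * ∏ i, fsp (d i) = lam F N θ₂ d / ∏ i, ((d i : ℝ)) := by
  unfold lam
  split_ifs with h
  · obtain ⟨hsq, -, -, -⟩ := h
    have hd : ∀ i, fsp (d i) = 1 / (d i : ℝ) := by
      intro i
      have hsqi : Squarefree (d i) :=
        Squarefree.squarefree_of_dvd (Finset.dvd_prod_of_mem _ (Finset.mem_univ i)) hsq
      rw [fsp, Finset.prod_div_distrib, Finset.prod_const_one, ← Nat.cast_prod,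
        Nat.prod_primeFactors_of_squarefree hsqi]
    rw [Finset.prod_congr rfl (fun i _ => hd i), Finset.prod_div_distrib,
      Finset.prod_const_one, mul_one_div]
  · simp

lemma prod_update_moebius_totient {p₁ : ℕ} (r : ι → ℕ) (m : ι) (hp : p₁.Prime)
    (hcop : Nat.Coprime p₁ (r m)) :
    (∏ i, ((ArithmeticFunction.moebius (Function.update r m (p₁ * r m) i) : ℤ) : ℝ) *
        ((Function.update r m (p₁ * r m) i).totient : ℝ)) =
      (((ArithmeticFunction.moebius p₁ : ℤ) : ℝ) * (p₁.totient : ℝ)) *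
        ∏ i, ((ArithmeticFunction.moebius (r i) : ℤ) : ℝ) * ((r i).totient : ℝ) := by
  have key : ∀ i, ((ArithmeticFunction.moebius (Function.update r m (p₁ * r m) i) : ℤ) : ℝ) *
      ((Function.update r m (p₁ * r m) i).totient : ℝ) =
      Function.update (fun i => ((ArithmeticFunction.moebius (r i) : ℤ) : ℝ) *
        ((r i).totient : ℝ)) m
        (((ArithmeticFunction.moebius (p₁ * r m) : ℤ) : ℝ) * ((p₁ * r m).totient : ℝ)) i :=
    fun i => Function.apply_update
      (fun _ n => ((ArithmeticFunction.moebius n : ℤ) : ℝ) * (n.totient : ℝ)) r m (p₁ * r m) i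
  rw [Finset.prod_congr rfl (fun i _ => key i),
    Finset.prod_update_of_mem (Finset.mem_univ m),
    ← Finset.mul_prod_erase Finset.univ
      (fun i => ((ArithmeticFunction.moebius (r i) : ℤ) : ℝ) * ((r i).totient : ℝ))
      (Finset.mem_univ m),
    ArithmeticFunction.isMultiplicative_moebius.map_mul_of_coprime hcop,
    Nat.totient_mul hcop]
  simp only [Finset.erase_eq]
  push_cast
  ring

/-- Lemma 8.2: relating `y^{(J,p₁,m)}` to `y` when `J = ∅`. -/
theorem stmt17 (k : ℕ) (hk : 1 ≤ k)
    (N : ℕ) (θ₂ : ℝ) (hθ₂ : 0 < θ₂)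
    (F : (Fin k → ℝ) → ℝ) (hF : ContDiff ℝ (⊤ : ℕ∞) F)
    (hsupp : ∀ x, F x ≠ 0 → (∀ i, x i ∈ Set.Icc (0 : ℝ) 1) ∧ ∑ i, x i ≤ 1)
    (p₁ : ℕ) (hp₁ : p₁ = 1 ∨ p₁.Prime) (m : Fin k)
    (r : Fin k → ℕ) (hne : yJvec F N θ₂ p₁ m r ≠ 0) :
    (p₁ ∣ r m → yJvec F N θ₂ p₁ m r = yvec F N θ₂ r) ∧
    (¬ p₁ ∣ r m →
      yJvec F N θ₂ p₁ m r =
        yvec F N θ₂ (Function.update r m (p₁ * r m)) /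
          (((ArithmeticFunction.moebius p₁ : ℤ) : ℝ) * (p₁.totient : ℝ))) := by
  constructor
  · intro hdvd
    unfold yJvec yvec
    congr 1
    apply tsum_congr
    intro d
    by_cases h : ∀ i, r i ∣ d i
    · rw [if_pos ⟨h, hdvd.trans (h m)⟩, if_pos h, lam_mul_fsp]
    · rw [if_neg (fun hc => h hc.1), if_neg h]
  · intro hnd
    rcases hp₁ with rfl | hp
    · exact absurd (one_dvd _) hnd
    have hcop : Nat.Coprime p₁ (r m) := (Nat.Prime.coprime_iff_not_dvd hp).mpr hnd
    have hμ : ((ArithmeticFunction.moebius p₁ : ℤ) : ℝ) = -1 := by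
      rw [ArithmeticFunction.moebius_apply_prime hp]; norm_num
    have hφ : (p₁.totient : ℝ) ≠ 0 := by
      exact_mod_cast (Nat.totient_pos.mpr hp.pos).ne'
    have hc : ((ArithmeticFunction.moebius p₁ : ℤ) : ℝ) * (p₁.totient : ℝ) ≠ 0 := by
      rw [hμ]; intro h; apply hφ; linarith [mul_eq_zero.mp h]
    unfold yJvec yvec
    rw [prod_update_moebius_totient r m hp hcop, mul_assoc,
      mul_div_cancel_left₀ _ hc]
    congr 1
    refine (tsum_congr fun d => ?_).symm
    have hiff : (∀ i, Function.update r m (p₁ * r m) i ∣ d i) ↔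
        ((∀ i, r i ∣ d i) ∧ p₁ ∣ d m) := by
      constructor
      · intro h
        refine ⟨fun i => ?_, (dvd_mul_right p₁ (r m)).trans (by simpa using h m)⟩
        by_cases him : i = m
        · subst him; exact (dvd_mul_left (r i) p₁).trans (by simpa using h i)
        · simpa [Function.update_of_ne him] using h i
      · rintro ⟨h1, h2⟩ i
        by_cases him : i = m
        · subst him; simpa using hcop.mul_dvd_of_dvd_of_dvd h2 (h1 i)
        · simpa [Function.update_of_ne him] using h1 i
    rw [lam_mul_fsp]
    by_cases h : (∀ i, r i ∣ d i) ∧ p₁ ∣ d m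
    · rw [if_pos (hiff.mpr h), if_pos h]
    · rw [if_neg (fun hc => h (hiff.mp hc)), if_neg h]
end
end
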